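/- Let f₁ : ℝ → ℝ be differentiable with |f₁'(s)| ≤ L for all s in the interval [0, 2π/w₁ + 2π/w₂₁], where w₁, w₂₁, w₂₂ ∈ ℕ satisfy w₁ ≤ w₂₁ < w₂₂, and let M ∈ ℕ with M ≥ 1. Set τ₁ = 2π/(w₂₁(M+1)) and τ₂ = 2π/(w₂₂(M+1)), and define the point clouds X₁ = { SW_{M,τ₁}f₁(t) : t ∈ [0, 2π/w₁] } and X₂ = { SW_{M,τ₂}f₁(t) : t ∈ [0, 2π/w₁] } in ℝ^{M+1}. Then the Hausdorff distance between X₁ and X₂ satisfies d_H(X₁, X₂) ≤ √(M+1) · √M · L · |2π/w₂₁ − 2π/w₂₂|. -/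

import Mathlib

/-- The sliding window embedding (SWE) of `f` at time `t` with embedding dimension `M`
and time lag `τ`: the vector `(f t, f (t+τ), …, f (t+Mτ)) ∈ ℝ^{M+1}` with Euclidean norm. -/
noncomputable def SWE (f : ℝ → ℝ) (M : ℕ) (τ : ℝ) (t : ℝ) :
    EuclideanSpace ℝ (Fin (M + 1)) :=
  WithLp.toLp 2 (fun i => f (t + (i : ℕ) * τ))

lemma mvt_abs (f : ℝ → ℝ) (L A : ℝ) (hdiff : Differentiable ℝ f)
    (hL : ∀ s ∈ Set.Icc (0 : ℝ) A, |deriv f s| ≤ L)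
    (x y : ℝ) (hx : x ∈ Set.Icc (0 : ℝ) A) (hy : y ∈ Set.Icc (0 : ℝ) A) :
    |f x - f y| ≤ L * |x - y| := by
  have := (convex_Icc (0 : ℝ) A).norm_image_sub_le_of_norm_hasDerivWithin_le
    (f' := deriv f) (fun s _ => (hdiff s).hasDerivAt.hasDerivWithinAt)
    (fun s hs => hL s hs) hy hx
  simpa [Real.norm_eq_abs] using this

theorem stmt_3 (f₁ : ℝ → ℝ) (L : ℝ) (M w₁ w₂₁ w₂₂ : ℕ) (hM : 1 ≤ M)
    (hw₁ : 0 < w₁) (h₁ : w₁ ≤ w₂₁) (h₂ : w₂₁ < w₂₂)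
    (hdiff : Differentiable ℝ f₁)
    (hL : ∀ s ∈ Set.Icc (0 : ℝ) (2 * Real.pi / (w₁ : ℝ) + 2 * Real.pi / (w₂₁ : ℝ)),
      |deriv f₁ s| ≤ L) :
    Metric.hausdorffDist
      ((fun t => SWE f₁ M (2 * Real.pi / ((w₂₁ : ℝ) * (M + 1))) t) ''
        Set.Icc 0 (2 * Real.pi / (w₁ : ℝ)))
      ((fun t => SWE f₁ M (2 * Real.pi / ((w₂₂ : ℝ) * (M + 1))) t) ''
        Set.Icc 0 (2 * Real.pi / (w₁ : ℝ)))
      ≤ Real.sqrt ((M : ℝ) + 1) * Real.sqrt (M : ℝ) * L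
          * |2 * Real.pi / (w₂₁ : ℝ) - 2 * Real.pi / (w₂₂ : ℝ)| := by
  have hπ : (0:ℝ) < 2 * Real.pi := by positivity
  have hw1 : (0:ℝ) < (w₁:ℝ) := by exact_mod_cast hw₁
  have hw21 : (0:ℝ) < (w₂₁:ℝ) := by exact_mod_cast lt_of_lt_of_le hw₁ h₁
  have hw22 : (0:ℝ) < (w₂₂:ℝ) := by exact_mod_cast lt_of_lt_of_le hw₁ (h₁.trans h₂.le)
  have hM1 : (0:ℝ) < (M:ℝ) + 1 := by positivity
  set a : ℝ := 2 * Real.pi / (w₁:ℝ) with ha_def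
  set b : ℝ := 2 * Real.pi / (w₂₁:ℝ) with hb_def
  set c : ℝ := 2 * Real.pi / (w₂₂:ℝ) with hc_def
  have ha : 0 ≤ a := by positivity
  have hb : 0 ≤ b := by positivity
  have hc : 0 ≤ c := by positivity
  have hcb : c ≤ b := by
    apply div_le_div_of_nonneg_left hπ.le hw21
    exact_mod_cast h₂.le
  have hL0 : 0 ≤ L := le_trans (abs_nonneg _) (hL 0 ⟨le_refl _, by positivity⟩)
  have hτ₁ : 2 * Real.pi / ((w₂₁:ℝ) * ((M:ℝ) + 1)) = b / ((M:ℝ) + 1) := by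
    rw [← div_div]
  have hτ₂ : 2 * Real.pi / ((w₂₂:ℝ) * ((M:ℝ) + 1)) = c / ((M:ℝ) + 1) := by
    rw [← div_div]
  have hsqM : (1:ℝ) ≤ Real.sqrt (M:ℝ) := by
    rw [show (1:ℝ) = Real.sqrt 1 from (Real.sqrt_one).symm]
    exact Real.sqrt_le_sqrt (by exact_mod_cast hM)
  have hr0 : 0 ≤ Real.sqrt ((M:ℝ) + 1) * Real.sqrt (M:ℝ) * L * |b - c| := by
    positivity
  -- key pointwise bound
  have key : ∀ t ∈ Set.Icc (0:ℝ) a,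
      dist (SWE f₁ M (b / ((M:ℝ) + 1)) t) (SWE f₁ M (c / ((M:ℝ) + 1)) t)
        ≤ Real.sqrt ((M:ℝ) + 1) * Real.sqrt (M:ℝ) * L * |b - c| := by
    intro t ht
    have coord : ∀ i : Fin (M + 1),
        dist (SWE f₁ M (b / ((M:ℝ) + 1)) t i) (SWE f₁ M (c / ((M:ℝ) + 1)) t i)
          ≤ L * |b - c| := by
      intro i
      have hi : ((i : ℕ) : ℝ) ≤ (M:ℝ) + 1 := by
        exact_mod_cast le_of_lt i.isLt
      have hi0 : (0:ℝ) ≤ ((i : ℕ) : ℝ) := by positivity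
      have mem₁ : t + (i : ℕ) * (b / ((M:ℝ) + 1)) ∈ Set.Icc (0:ℝ) (a + b) := by
        constructor
        · have : 0 ≤ ((i:ℕ):ℝ) * (b / ((M:ℝ) + 1)) := by positivity
          linarith [ht.1]
        · have : ((i:ℕ):ℝ) * (b / ((M:ℝ) + 1)) ≤ ((M:ℝ) + 1) * (b / ((M:ℝ) + 1)) :=
            mul_le_mul_of_nonneg_right hi (by positivity)
          have hb' : ((M:ℝ) + 1) * (b / ((M:ℝ) + 1)) = b := by field_simp
          linarith [ht.2]
      have mem₂ : t + (i : ℕ) * (c / ((M:ℝ) + 1)) ∈ Set.Icc (0:ℝ) (a + b) := by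
        constructor
        · have : 0 ≤ ((i:ℕ):ℝ) * (c / ((M:ℝ) + 1)) := by positivity
          linarith [ht.1]
        · have : ((i:ℕ):ℝ) * (c / ((M:ℝ) + 1)) ≤ ((M:ℝ) + 1) * (c / ((M:ℝ) + 1)) :=
            mul_le_mul_of_nonneg_right hi (by positivity)
          have hc' : ((M:ℝ) + 1) * (c / ((M:ℝ) + 1)) = c := by field_simp
          linarith [ht.2, hcb]
      have h := mvt_abs f₁ L (a + b) hdiff hL _ _ mem₁ mem₂
      have hdiffpts : |(t + (i:ℕ) * (b / ((M:ℝ) + 1))) - (t + (i:ℕ) * (c / ((M:ℝ) + 1)))|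
          = ((i:ℕ):ℝ) / ((M:ℝ) + 1) * |b - c| := by
        rw [show (t + (i:ℕ) * (b / ((M:ℝ) + 1))) - (t + (i:ℕ) * (c / ((M:ℝ) + 1)))
            = ((i:ℕ):ℝ) / ((M:ℝ) + 1) * (b - c) by ring]
        rw [abs_mul, abs_of_nonneg (by positivity : (0:ℝ) ≤ ((i:ℕ):ℝ) / ((M:ℝ) + 1))]
      have hfrac : ((i:ℕ):ℝ) / ((M:ℝ) + 1) ≤ 1 := by
        rw [div_le_one hM1]; exact hi
      calc dist (SWE f₁ M (b / ((M:ℝ) + 1)) t i) (SWE f₁ M (c / ((M:ℝ) + 1)) t i)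
          = |f₁ (t + (i:ℕ) * (b / ((M:ℝ) + 1))) - f₁ (t + (i:ℕ) * (c / ((M:ℝ) + 1)))| := by
            simp [SWE, Real.dist_eq]
        _ ≤ L * (((i:ℕ):ℝ) / ((M:ℝ) + 1) * |b - c|) := by rw [← hdiffpts]; exact h
        _ ≤ L * (1 * |b - c|) := by
            apply mul_le_mul_of_nonneg_left _ hL0
            exact mul_le_mul_of_nonneg_right hfrac (abs_nonneg _)
        _ = L * |b - c| := by ring
    rw [EuclideanSpace.dist_eq]
    have hsum : ∑ i : Fin (M + 1),
        dist (SWE f₁ M (b / ((M:ℝ) + 1)) t i) (SWE f₁ M (c / ((M:ℝ) + 1)) t i) ^ 2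
        ≤ ((M:ℝ) + 1) * (L * |b - c|) ^ 2 := by
      calc ∑ i : Fin (M + 1), dist (SWE f₁ M (b / ((M:ℝ) + 1)) t i)
              (SWE f₁ M (c / ((M:ℝ) + 1)) t i) ^ 2
          ≤ ∑ _i : Fin (M + 1), (L * |b - c|) ^ 2 := by
            apply Finset.sum_le_sum
            intro i _
            exact pow_le_pow_left₀ dist_nonneg (coord i) 2
        _ = ((M:ℝ) + 1) * (L * |b - c|) ^ 2 := by
            simp [Finset.card_fin]
    calc Real.sqrt (∑ i : Fin (M + 1), dist (SWE f₁ M (b / ((M:ℝ) + 1)) t i)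
            (SWE f₁ M (c / ((M:ℝ) + 1)) t i) ^ 2)
        ≤ Real.sqrt (((M:ℝ) + 1) * (L * |b - c|) ^ 2) := Real.sqrt_le_sqrt hsum
      _ = Real.sqrt ((M:ℝ) + 1) * (L * |b - c|) := by
          rw [Real.sqrt_mul (by positivity), Real.sqrt_sq (by positivity)]
      _ ≤ Real.sqrt ((M:ℝ) + 1) * Real.sqrt (M:ℝ) * L * |b - c| := by
          have h1 : Real.sqrt ((M:ℝ) + 1) * (L * |b - c|)
              = Real.sqrt ((M:ℝ) + 1) * 1 * L * |b - c| := by ring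
          rw [h1]
          apply mul_le_mul_of_nonneg_right _ (abs_nonneg _)
          apply mul_le_mul_of_nonneg_right _ hL0
          exact mul_le_mul_of_nonneg_left hsqM (Real.sqrt_nonneg _)
  apply Metric.hausdorffDist_le_of_mem_dist hr0
  · rintro x ⟨t, ht, rfl⟩
    refine ⟨SWE f₁ M (2 * Real.pi / ((w₂₂:ℝ) * ((M:ℝ) + 1))) t, ⟨t, ht, rfl⟩, ?_⟩
    rw [hτ₁, hτ₂]
    exact key t ht
  · rintro x ⟨t, ht, rfl⟩
    refine ⟨SWE f₁ M (2 * Real.pi / ((w₂₁:ℝ) * ((M:ℝ) + 1))) t, ⟨t, ht, rfl⟩, ?_⟩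
    rw [hτ₁, hτ₂, dist_comm]
    exact key t ht
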